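/- arXiv:1210.2017 — 2 statements merged into one kernel-verified Lean document; each statement's English description precedes it below -/
import Mathlib

section
/- Let E₀, and vectors c, c', J ∈ ℝ³ be real quantities with E₀ ≥ |c| and E₀ ≥ (1/2)√(2(|c'|² + |J|²)). If 2E₀(E₀² − |c|²) − 2E₀(|c'|² + |J|²) + 4|c||c' × J| ≥ 0, then E₀ ≥ √((|c'|² + |J|²) + 2|c|²) − |c|. -/
/-!
With `a = |c|` and `s = |c'|² + |J|²`, Lagrange's identity gives `2|c' × J| ≤ 2|c'||J| ≤ s`, so the
hypothesis on the principal minors implies `(E₀ - a)(E₀² + a E₀ - s) ≥ 0`. If `E₀ > a` this says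
`s ≤ E₀² + a E₀`, hence `s + 2a² ≤ (E₀ + a)²`; if `E₀ = a` the same bound is `s ≤ 2E₀²`, which is the
hypothesis `E₀ ≥ ½ √(2s)`.
-/

noncomputable def norm3 (v : Fin 3 → ℝ) : ℝ :=
  Real.sqrt (v 0 ^ 2 + v 1 ^ 2 + v 2 ^ 2)

def cross3 (u v : Fin 3 → ℝ) : Fin 3 → ℝ :=
  ![u 1 * v 2 - u 2 * v 1, u 2 * v 0 - u 0 * v 2, u 0 * v 1 - u 1 * v 0]

open Matrix

lemma norm3_nonneg (v : Fin 3 → ℝ) : 0 ≤ norm3 v :=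
  Real.sqrt_nonneg _

lemma norm3_sq (v : Fin 3 → ℝ) : norm3 v ^ 2 = v ⬝ᵥ v := by
  rw [norm3, Real.sq_sqrt (by positivity), dotProduct, Fin.sum_univ_three]
  ring

lemma cross3_eq_crossProduct (u v : Fin 3 → ℝ) : cross3 u v = u ⨯₃ v :=
  (cross_apply u v).symm

lemma norm3_cross3_le (u v : Fin 3 → ℝ) : norm3 (cross3 u v) ≤ norm3 u * norm3 v := by
  have lagrange : norm3 (cross3 u v) ^ 2 = (norm3 u * norm3 v) ^ 2 - (u ⬝ᵥ v) ^ 2 := by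
    rw [mul_pow, norm3_sq, norm3_sq, norm3_sq, cross3_eq_crossProduct, cross_dot_cross,
      dotProduct_comm v u]
    ring
  refine le_of_sq_le_sq ?_ (mul_nonneg (norm3_nonneg u) (norm3_nonneg v))
  rw [lagrange]
  exact sub_le_self _ (sq_nonneg _)

lemma two_mul_norm3_cross3_le (u v : Fin 3 → ℝ) :
    2 * norm3 (cross3 u v) ≤ norm3 u ^ 2 + norm3 v ^ 2 := by
  nlinarith [norm3_cross3_le u v, sq_nonneg (norm3 u - norm3 v)]

lemma sq_le_two_mul_sq_of_half_sqrt_le {s E : ℝ} (h : (1 / 2) * Real.sqrt (2 * s) ≤ E) :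
    s ≤ 2 * E ^ 2 := by
  have h' : Real.sqrt (2 * s) ≤ 2 * E := by linarith
  nlinarith [(Real.sqrt_le_iff.mp h').2]

lemma add_two_mul_sq_le_add_sq {E a s : ℝ} (ha : 0 ≤ a) (haE : a ≤ E)
    (hs : s ≤ 2 * E ^ 2) (hP : 0 ≤ (E - a) * (E ^ 2 + a * E - s)) :
    s + 2 * a ^ 2 ≤ (E + a) ^ 2 := by
  rcases haE.lt_or_eq with hlt | rfl
  · have hquad : 0 ≤ E ^ 2 + a * E - s := (mul_nonneg_iff_of_pos_left (sub_pos.2 hlt)).mp hP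
    nlinarith [mul_le_mul_of_nonneg_left haE ha]
  · nlinarith

lemma sqrt_add_two_mul_sq_sub_le {E a s : ℝ} (ha : 0 ≤ a) (haE : a ≤ E)
    (hs : s ≤ 2 * E ^ 2) (hP : 0 ≤ (E - a) * (E ^ 2 + a * E - s)) :
    Real.sqrt (s + 2 * a ^ 2) - a ≤ E := by
  have hsq := add_two_mul_sq_le_add_sq ha haE hs hP
  have := (Real.sqrt_le_left (by linarith : 0 ≤ E + a)).mpr hsq
  linarith

/-- the key algebraic step giving the first lower bound on the
total energy in the positive energy theorem for asymptotically AdS initial data. -/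
theorem first_energy_lower_bound (E₀ : ℝ) (c c' J : Fin 3 → ℝ)
    (h1 : E₀ ≥ norm3 c)
    (h2 : E₀ ≥ (1 / 2) * Real.sqrt (2 * (norm3 c' ^ 2 + norm3 J ^ 2)))
    (h3 : 2 * E₀ * (E₀ ^ 2 - norm3 c ^ 2) - 2 * E₀ * (norm3 c' ^ 2 + norm3 J ^ 2)
          + 4 * norm3 c * norm3 (cross3 c' J) ≥ 0) :
    E₀ ≥ Real.sqrt ((norm3 c' ^ 2 + norm3 J ^ 2) + 2 * norm3 c ^ 2) - norm3 c := by
  have ha := norm3_nonneg c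
  have hcross := two_mul_norm3_cross3_le c' J
  have hP : 0 ≤ (E₀ - norm3 c) * (E₀ ^ 2 + norm3 c * E₀ - (norm3 c' ^ 2 + norm3 J ^ 2)) := by
    nlinarith [mul_le_mul_of_nonneg_left hcross ha]
  exact sqrt_add_two_mul_sq_sub_le ha h1 (sq_le_two_mul_sq_of_half_sqrt_le h2) hP
end

section
/- Let E₀, b₀, q ∈ ℝ and c, b, c', J ∈ ℝ³, and suppose the following hold: E₀ ≥ 0, E₀² ≥ b₀² + (1/2)(|c'|² + |J|² + q²), and E₀² ≥ (1/2)(|c|² + |b|²) + (1/4)(|c'|² + |J|² + q²). Define A = b₀² + |c|² + |b|² + |c'|² + |J|² + q². If additionally E₀(E₀² − A) + 2E₀|b||c| + 2|q||b||J| + 2|c||c'×J| ≥ 0, then E₀ ≥ (A + |b|² + |c|²)^{1/2} − |b| − |c|. -/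
/-!
Write `β = |b|`, `γ = |c|`. By the two quadratic hypotheses, `|q| |J|` and `|c' × J| ≤ |c'| |J|`
are at most `E₀²` (AM–GM), and `A ≤ 3 E₀²`. Feeding these into the cubic hypothesis and dividing
by `E₀` gives `A ≤ E₀² + 2E₀β + 2E₀γ + 2βγ`, i.e. `A + β² + γ² ≤ (E₀ + β + γ)²`; when `E₀ = 0`
the same inequality holds because then `A ≤ 0`. Taking square roots yields the claim.
-/

open Matrix

lemma mul_le_sq_of_sq_add_sq_le {x y e : ℝ} (h : x ^ 2 + y ^ 2 ≤ 2 * e ^ 2) : x * y ≤ e ^ 2 := by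
  nlinarith [sq_nonneg (x - y)]

lemma add_sq_add_sq_le_sq_of_cubic_nonneg {E A β γ P X : ℝ} (hE : 0 ≤ E) (hβ : 0 ≤ β)
    (hγ : 0 ≤ γ) (hA : A ≤ 3 * E ^ 2) (hP : P ≤ E ^ 2) (hX : X ≤ E ^ 2)
    (h : 0 ≤ E * (E ^ 2 - A) + 2 * E * β * γ + 2 * β * P + 2 * γ * X) :
    A + β ^ 2 + γ ^ 2 ≤ (E + β + γ) ^ 2 := by
  rcases hE.eq_or_lt with rfl | hE
  · nlinarith [mul_nonneg hβ hγ]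
  have : 0 ≤ E * (E ^ 2 - A + 2 * E * β + 2 * E * γ + 2 * β * γ) := by
    nlinarith [mul_le_mul_of_nonneg_left hP hβ, mul_le_mul_of_nonneg_left hX hγ]
  nlinarith [nonneg_of_mul_nonneg_right this hE]

/-- the third lower bound in Theorem 5.2 (positive energy theorem for
asymptotically AdS Einstein–Maxwell initial data), extracted algebraically. -/
theorem third_energy_lower_bound (E₀ b₀ q : ℝ) (c b c' J : Fin 3 → ℝ) (A : ℝ)
    (hE₀ : E₀ ≥ 0)
    (h1 : E₀ ^ 2 ≥ b₀ ^ 2 + (1 / 2) * (norm3 c' ^ 2 + norm3 J ^ 2 + q ^ 2))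
    (h2 : E₀ ^ 2 ≥ (1 / 2) * (norm3 c ^ 2 + norm3 b ^ 2)
          + (1 / 4) * (norm3 c' ^ 2 + norm3 J ^ 2 + q ^ 2))
    (hA : A = b₀ ^ 2 + norm3 c ^ 2 + norm3 b ^ 2 + norm3 c' ^ 2 + norm3 J ^ 2 + q ^ 2)
    (h3 : E₀ * (E₀ ^ 2 - A) + 2 * E₀ * norm3 b * norm3 c
          + 2 * |q| * norm3 b * norm3 J + 2 * norm3 c * norm3 (cross3 c' J) ≥ 0) :
    E₀ ≥ Real.sqrt (A + norm3 b ^ 2 + norm3 c ^ 2) - norm3 b - norm3 c := by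
  have hqJ : |q| * norm3 J ≤ E₀ ^ 2 :=
    mul_le_sq_of_sq_add_sq_le (by nlinarith [sq_abs q, sq_nonneg b₀, sq_nonneg (norm3 c')])
  have hc'J : norm3 (cross3 c' J) ≤ E₀ ^ 2 :=
    (norm3_cross3_le c' J).trans
      (mul_le_sq_of_sq_add_sq_le (by nlinarith [sq_nonneg b₀, sq_nonneg q]))
  have hA3 : A ≤ 3 * E₀ ^ 2 := by linarith
  have hsq := add_sq_add_sq_le_sq_of_cubic_nonneg hE₀ (norm3_nonneg b) (norm3_nonneg c) hA3
    hqJ hc'J (by linarith)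
  have hsqrt := (Real.sqrt_le_left (by linarith [norm3_nonneg b, norm3_nonneg c])).2 hsq
  linarith
end
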